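/- arXiv:2508.17251 — 4 statements merged into one kernel-verified Lean document; each statement's English description precedes it below -/
import Mathlib

section
/- Suppose the data matrices X₂₋ ∈ ℝ^(n₂×T), X₂₊ ∈ ℝ^(n₂×T), U₂₋ ∈ ℝ^(m₂×T) satisfy X₂₊ = A₂X₂₋ + B₂U₂₋. If G ∈ ℝ^(T×n₁) satisfies X₂₊G = X₂₋GA₁ and U₂₋G = C₁, then Θ := X₂₋G solves the Sylvester equation A₂Θ − ΘA₁ = −B₂C₁. -/
theorem data_driven_sylvester_sufficiency
    (n₁ n₂ m₂ T : ℕ)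
    (A₁ : Matrix (Fin n₁) (Fin n₁) ℝ) (C₁ : Matrix (Fin m₂) (Fin n₁) ℝ)
    (A₂ : Matrix (Fin n₂) (Fin n₂) ℝ) (B₂ : Matrix (Fin n₂) (Fin m₂) ℝ)
    (X₂m X₂p : Matrix (Fin n₂) (Fin T) ℝ) (U₂m : Matrix (Fin m₂) (Fin T) ℝ)
    (hdata : X₂p = A₂ * X₂m + B₂ * U₂m)
    (G : Matrix (Fin T) (Fin n₁) ℝ)
    (hG1 : X₂p * G = X₂m * G * A₁)
    (hG2 : U₂m * G = C₁) :
    A₂ * (X₂m * G) - (X₂m * G) * A₁ = -(B₂ * C₁) := by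
  calc A₂ * (X₂m * G) - X₂m * G * A₁
      = A₂ * (X₂m * G) - (A₂ * X₂m + B₂ * U₂m) * G := by rw [← hG1, hdata]
    _ = -(B₂ * (U₂m * G)) := by rw [Matrix.add_mul, Matrix.mul_assoc, Matrix.mul_assoc]; abel
    _ = -(B₂ * C₁) := by rw [hG2]
end

section
/- Suppose X₂₊ = A₂X₂₋ + B₂U₂₋, the stacked matrix [X₂₋; U₂₋] has full row rank n₂ + m₂, and λ(A₁) ∩ λ(A₂) = ∅. Then there exists G ∈ ℝ^(T×n₁) with X₂₊G = X₂₋GA₁ and U₂₋G = C₁, and the unique solution Θ of A₂Θ − ΘA₁ = −B₂C₁ equals X₂₋G for every such G. -/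
/-!
If `B Δ = Δ A` then `Δ p(A) = p(B) Δ` for every polynomial `p`. Taking for `p` the characteristic
polynomial of `A` kills the left side, while `p(B)` is invertible by the spectral mapping theorem
when `A` and `B` have no common eigenvalue, so `Δ = 0`. Hence `Θ ↦ A₂ Θ - Θ A₁` is injective,
so bijective, and the Sylvester equation has a unique solution `Θ`. Full row rank of
`[X₂₋; U₂₋]` yields `G` with `X₂₋ G = Θ` and `U₂₋ G = C₁`. Finally, once `U₂₋ G = C₁`, the data
relation `X₂₊ = A₂ X₂₋ + B₂ U₂₋` makes `X₂₊ G = X₂₋ G A₁` equivalent to `X₂₋ G` solving the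
Sylvester equation.
-/

/-- The set of complex eigenvalues of a real square matrix. -/
noncomputable def cSpectrum {n : ℕ} (A : Matrix (Fin n) (Fin n) ℝ) : Set ℂ :=
  spectrum ℂ (A.map Complex.ofReal)

open Polynomial

namespace Matrix

section CommRing

variable {R : Type*} [CommRing R] {m n : Type*} [Fintype m] [Fintype n]

def sylvesterMap (B : Matrix n n R) (A : Matrix m m R) : Matrix n m R →ₗ[R] Matrix n m R :=
  mulLeftLinearMap m R B - mulRightLinearMap n R A

theorem sylvesterMap_apply (B : Matrix n n R) (A : Matrix m m R) (Θ : Matrix n m R) :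
    sylvesterMap B A Θ = B * Θ - Θ * A := rfl

variable [DecidableEq m] [DecidableEq n]

theorem mul_pow_eq_pow_mul_of_mul_eq_mul {A : Matrix m m R} {B : Matrix n n R}
    {Δ : Matrix n m R} (h : B * Δ = Δ * A) (k : ℕ) : Δ * A ^ k = B ^ k * Δ := by
  induction k with
  | zero => simp
  | succ k ih => rw [pow_succ, pow_succ, ← Matrix.mul_assoc, ih, Matrix.mul_assoc, ← h,
      Matrix.mul_assoc]

theorem mul_aeval_eq_aeval_mul_of_mul_eq_mul {A : Matrix m m R} {B : Matrix n n R}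
    {Δ : Matrix n m R} (h : B * Δ = Δ * A) (p : R[X]) : Δ * aeval A p = aeval B p * Δ := by
  induction p using Polynomial.induction_on' with
  | add p q hp hq => rw [map_add, map_add, Matrix.mul_add, Matrix.add_mul, hp, hq]
  | monomial k a =>
    simp only [aeval_monomial, algebraMap_eq_diagonal, Pi.algebraMap_def,
      ← smul_eq_diagonal_mul, Matrix.mul_smul, Matrix.smul_mul,
      mul_pow_eq_pow_mul_of_mul_eq_mul h k]

end CommRing

section IsAlgClosed

variable {K : Type*} [Field K] [IsAlgClosed K] {m n : Type*} [Fintype m] [DecidableEq m]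
  [Fintype n] [DecidableEq n]

theorem isUnit_aeval_charpoly_of_disjoint_spectrum {A : Matrix m m K} {B : Matrix n n K}
    (h : Disjoint (spectrum K A) (spectrum K B)) : IsUnit (aeval B A.charpoly) := by
  cases isEmpty_or_nonempty m
  · simp [charpoly_isEmpty]
  have hdeg : 0 < A.charpoly.degree := by
    rw [charpoly_degree_eq_dim]
    exact_mod_cast Fintype.card_pos
  rw [← spectrum.zero_notMem_iff K, spectrum.map_polynomial_aeval_of_degree_pos B _ hdeg]
  rintro ⟨μ, hμB, hμA⟩
  exact h.notMem_of_mem_right hμB (mem_spectrum_iff_isRoot_charpoly.2 hμA)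

theorem eq_zero_of_mul_eq_mul_of_disjoint_spectrum {A : Matrix m m K} {B : Matrix n n K}
    {Δ : Matrix n m K} (hAB : Disjoint (spectrum K A) (spectrum K B)) (h : B * Δ = Δ * A) :
    Δ = 0 := by
  have hΔ := mul_aeval_eq_aeval_mul_of_mul_eq_mul h A.charpoly
  rw [aeval_self_charpoly, Matrix.mul_zero, eq_comm] at hΔ
  have hdet := (isUnit_iff_isUnit_det _).1 (isUnit_aeval_charpoly_of_disjoint_spectrum hAB)
  rw [← nonsing_inv_mul_cancel_left _ Δ hdet, hΔ, Matrix.mul_zero]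

end IsAlgClosed

section Field

variable {K L : Type*} [Field K] [Field L] [IsAlgClosed L] {m n : Type*} [Fintype m]
  [DecidableEq m] [Fintype n] [DecidableEq n]

theorem sylvesterMap_bijective {A : Matrix m m K} {B : Matrix n n K} (f : K →+* L)
    (hAB : Disjoint (spectrum L (A.map f)) (spectrum L (B.map f))) :
    Function.Bijective (sylvesterMap B A) := by
  have hinj : Function.Injective (sylvesterMap B A) := by
    rw [← LinearMap.ker_eq_bot, LinearMap.ker_eq_bot']
    intro Δ hΔ
    rw [sylvesterMap_apply, sub_eq_zero] at hΔ
    refine map_injective f.injective (?_ : Δ.map f = (0 : Matrix n m K).map f)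
    rw [Matrix.map_zero f (map_zero f)]
    exact eq_zero_of_mul_eq_mul_of_disjoint_spectrum hAB
      (by rw [← Matrix.map_mul, ← Matrix.map_mul, hΔ])
  exact ⟨hinj, LinearMap.injective_iff_surjective.1 hinj⟩

end Field

theorem exists_mul_eq_of_rank_eq_card {K : Type*} [Field K] {m l o : Type*} [Fintype m]
    [DecidableEq m] [Fintype l] [DecidableEq l] {M : Matrix m l K} (hM : M.rank = Fintype.card m)
    (Y : Matrix m o K) : ∃ G : Matrix l o K, M * G = Y := by
  have hrange : LinearMap.range M.mulVecLin = ⊤ :=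
    Submodule.eq_top_of_finrank_eq (by rw [← rank, hM, Module.finrank_fintype_fun_eq_card])
  obtain ⟨g, hg⟩ := M.mulVecLin.exists_rightInverse_of_surjective hrange
  have hMg : M * LinearMap.toMatrix' g = 1 := by
    rw [← LinearMap.toMatrix'_toLin' M, ← LinearMap.toMatrix'_comp, toLin'_apply', hg,
      LinearMap.toMatrix'_id]
  exact ⟨LinearMap.toMatrix' g * Y, by rw [← Matrix.mul_assoc, hMg, Matrix.one_mul]⟩

theorem mul_eq_mul_mul_iff_sylvester {R : Type*} [Ring R] {n m t k : Type*} [Fintype n]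
    [Fintype m] [Fintype t] [Fintype k] {A : Matrix n n R} {B : Matrix n m R} {F : Matrix k k R}
    {X X' : Matrix n t R} {U : Matrix m t R} {G : Matrix t k R} {C : Matrix m k R}
    (hX' : X' = A * X + B * U) (hU : U * G = C) :
    X' * G = X * G * F ↔ A * (X * G) - X * G * F = -(B * C) := by
  rw [hX', Matrix.add_mul, Matrix.mul_assoc, Matrix.mul_assoc, hU, ← sub_eq_zero,
    eq_neg_iff_add_eq_zero, ← Matrix.mul_assoc]
  abel_nf

end Matrix

theorem data_driven_sylvester_existence_and_characterisation
    (n₁ n₂ m₂ T : ℕ)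
    (A₁ : Matrix (Fin n₁) (Fin n₁) ℝ) (C₁ : Matrix (Fin m₂) (Fin n₁) ℝ)
    (A₂ : Matrix (Fin n₂) (Fin n₂) ℝ) (B₂ : Matrix (Fin n₂) (Fin m₂) ℝ)
    (X₂m X₂p : Matrix (Fin n₂) (Fin T) ℝ) (U₂m : Matrix (Fin m₂) (Fin T) ℝ)
    (hdata : X₂p = A₂ * X₂m + B₂ * U₂m)
    (hrank : (Matrix.fromRows X₂m U₂m).rank = n₂ + m₂)
    (hspec : cSpectrum A₁ ∩ cSpectrum A₂ = ∅) :
    (∃ G : Matrix (Fin T) (Fin n₁) ℝ, X₂p * G = X₂m * G * A₁ ∧ U₂m * G = C₁) ∧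
    (∃! Θ : Matrix (Fin n₂) (Fin n₁) ℝ, A₂ * Θ - Θ * A₁ = -(B₂ * C₁)) ∧
    (∀ G : Matrix (Fin T) (Fin n₁) ℝ, X₂p * G = X₂m * G * A₁ → U₂m * G = C₁ →
      ∀ Θ : Matrix (Fin n₂) (Fin n₁) ℝ,
        A₂ * Θ - Θ * A₁ = -(B₂ * C₁) → Θ = X₂m * G) := by
  obtain ⟨Θ₀, hΘ₀, huniq⟩ : ∃! Θ : Matrix (Fin n₂) (Fin n₁) ℝ, A₂ * Θ - Θ * A₁ = -(B₂ * C₁) :=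
    (Matrix.sylvesterMap_bijective Complex.ofRealHom
      (Set.disjoint_iff_inter_eq_empty.2 hspec)).existsUnique _
  obtain ⟨G₀, hG₀⟩ := Matrix.exists_mul_eq_of_rank_eq_card (M := Matrix.fromRows X₂m U₂m)
    (by rw [hrank, Fintype.card_sum, Fintype.card_fin, Fintype.card_fin]) (Matrix.fromRows Θ₀ C₁)
  rw [Matrix.fromRows_mul, Matrix.fromRows_ext_iff] at hG₀
  obtain ⟨hXG₀, hUG₀⟩ := hG₀
  refine ⟨⟨G₀, (Matrix.mul_eq_mul_mul_iff_sylvester hdata hUG₀).2 (by rwa [hXG₀]), hUG₀⟩,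
    ⟨Θ₀, hΘ₀, huniq⟩, fun G hG hUG Θ hΘ => ?_⟩
  rw [huniq Θ hΘ, huniq _ ((Matrix.mul_eq_mul_mul_iff_sylvester hdata hUG).1 hG)]
end

section
/- Let Θ be the exact solution of A₂Θ − ΘA₁ = −B₂C₁, and let Θ̂ = X̄₂₋Ĝ where Ĝ satisfies X̄₂₊Ĝ = X̄₂₋Ĝ Ā₁ and Ū₂₋Ĝ = C₁, with noisy data X̄₂₋ = X₂₋ + ΔX₂₋, X̄₂₊ = X₂₊ + ΔX₂₊, Ū₂₋ = U₂₋ + ΔU₂₋, Ā₁ = A₁ + ΔA₁, and true dynamics X₂₊ = A₂X₂₋ + B₂U₂₋ + D₂₋. Define R₂₋ := A₂ΔX₂₋ − ΔX₂₊ + B₂ΔU₂₋ − D₂₋. Then ΔΘ := Θ − Θ̂ satisfies the Sylvester equation A₂ΔΘ − ΔΘA₁ = −R₂₋Ĝ − X̄₂₋Ĝ ΔA₁. -/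
/-!
Both `Θ` and the data-driven estimate `X̄₂₋ Ĝ` nearly solve the same Sylvester equation: the
defining relation of `Ĝ` turns `X̄₂₋ Ĝ A₁` into `X̄₂₊ Ĝ − X̄₂₋ Ĝ ΔA₁`, and the true dynamics turn
`A₂ X̄₂₋ − X̄₂₊` into `R₂₋ − B₂ Ū₂₋`, whose product with `Ĝ` is `R₂₋ Ĝ − B₂ C₁`. Subtracting the two
equations (the Sylvester operator is additive), the `B₂ C₁` terms cancel.
-/

namespace Matrix

variable {R : Type*} [Ring R] {k m p t : Type*} [Fintype k] [Fintype m]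

def sylvester (A₂ : Matrix m m R) (A₁ : Matrix k k R) (Θ : Matrix m k R) : Matrix m k R :=
  A₂ * Θ - Θ * A₁

theorem sylvester_sub (A₂ : Matrix m m R) (A₁ : Matrix k k R) (Θ Θ' : Matrix m k R) :
    sylvester A₂ A₁ (Θ - Θ') = sylvester A₂ A₁ Θ - sylvester A₂ A₁ Θ' := by
  simp only [sylvester, Matrix.mul_sub, Matrix.sub_mul]
  abel

theorem sylvester_mul_of_mul_eq_mul_add [Fintype t] {A₂ : Matrix m m R} {A₁ ΔA₁ : Matrix k k R}
    {X Y : Matrix m t R} {G : Matrix t k R} (hG : Y * G = X * G * (A₁ + ΔA₁)) :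
    sylvester A₂ A₁ (X * G) = (A₂ * X - Y) * G + X * G * ΔA₁ := by
  rw [sylvester, Matrix.sub_mul, hG, Matrix.mul_add, ← Matrix.mul_assoc A₂]
  abel

theorem mul_add_sub_add_of_eq_mul_add_mul_add [Fintype p] {A : Matrix m m R} {B : Matrix m p R}
    {X Y ΔX ΔY D : Matrix m t R} {U ΔU : Matrix p t R} (hY : Y = A * X + B * U + D) :
    A * (X + ΔX) - (Y + ΔY) = (A * ΔX - ΔY + B * ΔU - D) - B * (U + ΔU) := by
  subst hY
  simp only [Matrix.mul_add]
  abel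

end Matrix

open Matrix in
theorem empirical_error_sylvester
    (n₁ n₂ m₂ T : ℕ)
    (A₁ ΔA₁ : Matrix (Fin n₁) (Fin n₁) ℝ) (C₁ : Matrix (Fin m₂) (Fin n₁) ℝ)
    (A₂ : Matrix (Fin n₂) (Fin n₂) ℝ) (B₂ : Matrix (Fin n₂) (Fin m₂) ℝ)
    (X₂m X₂p ΔX₂m ΔX₂p D₂m : Matrix (Fin n₂) (Fin T) ℝ)
    (U₂m ΔU₂m : Matrix (Fin m₂) (Fin T) ℝ)
    (Θ : Matrix (Fin n₂) (Fin n₁) ℝ)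
    (Ghat : Matrix (Fin T) (Fin n₁) ℝ)
    -- true (noisy) dynamics
    (hdata : X₂p = A₂ * X₂m + B₂ * U₂m + D₂m)
    -- exact Sylvester solution
    (hΘ : A₂ * Θ - Θ * A₁ = -(B₂ * C₁))
    -- Ghat computed from noisy data
    (hG1 : (X₂p + ΔX₂p) * Ghat = (X₂m + ΔX₂m) * Ghat * (A₁ + ΔA₁))
    (hG2 : (U₂m + ΔU₂m) * Ghat = C₁) :
    A₂ * (Θ - (X₂m + ΔX₂m) * Ghat) - (Θ - (X₂m + ΔX₂m) * Ghat) * A₁ =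
      -((A₂ * ΔX₂m - ΔX₂p + B₂ * ΔU₂m - D₂m) * Ghat) -
        (X₂m + ΔX₂m) * Ghat * ΔA₁ := by
  change sylvester A₂ A₁ (Θ - (X₂m + ΔX₂m) * Ghat) = _
  rw [sylvester_sub, sylvester, hΘ, sylvester_mul_of_mul_eq_mul_add hG1,
    mul_add_sub_add_of_eq_mul_add_mul_add (ΔX := ΔX₂m) (ΔY := ΔX₂p) (ΔU := ΔU₂m) hdata,
    Matrix.sub_mul, Matrix.mul_assoc B₂, hG2]
  abel
end

section
/- Suppose X₁₋ ∈ ℝ^(n₁×T) has full row rank n₁, X₁₊ = A₁X₁₋, Y₁₋ = C₁X₁₋, and X₂₊ = A₂X₂₋ + B₂U₂₋ with [X₂₋; U₂₋] of full row rank and λ(A₁) ∩ λ(A₂) = ∅. Then G ∈ ℝ^(T×n₁) satisfies X₂₊G X₁₋ = X₂₋G X₁₊ and U₂₋G X₁₋ = Y₁₋ if and only if G satisfies X₂₊G = X₂₋GA₁ and U₂₋G = C₁; in either case Θ := X₂₋G is the unique solution of A₂Θ − ΘA₁ = −B₂C₁. -/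
open Polynomial

namespace Matrix

variable {K : Type*} {l m n : Type*} [Fintype m] [Fintype n]

theorem mul_left_injective_of_rank_eq_card [Field K] {X : Matrix m n K}
    (h : X.rank = Fintype.card m) : Function.Injective (fun M : Matrix l m K => M * X) := by
  have hrows : LinearIndependent K X.row := by
    rw [linearIndependent_iff_card_eq_finrank_span, Set.finrank, ← rank_eq_finrank_span_row, h]
  intro M N hMN
  exact ext_row fun i => vecMul_injective_iff.2 hrows congr(($hMN).row i)

variable [DecidableEq m] [DecidableEq n] [CommRing K]

theorem aeval_mul_eq_mul_aeval_of_mul_eq_mul {A : Matrix m m K} {B : Matrix n n K}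
    {D : Matrix n m K} (h : B * D = D * A) (p : K[X]) : aeval B p * D = D * aeval A p := by
  induction p using Polynomial.induction_on' with
  | add p q hp hq => rw [map_add, map_add, Matrix.add_mul, Matrix.mul_add, hp, hq]
  | monomial k c =>
    have hpow : B ^ k * D = D * A ^ k := by
      induction k with
      | zero => simp
      | succ k ih =>
        rw [pow_succ, pow_succ, Matrix.mul_assoc, h, ← Matrix.mul_assoc, ih, Matrix.mul_assoc]
    simp only [aeval_monomial, Algebra.algebraMap_eq_smul_one, Matrix.smul_mul, Matrix.mul_smul,
      Matrix.one_mul, hpow]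

theorem eq_zero_of_mul_eq_mul_of_isCoprime_charpoly {A : Matrix m m K} {B : Matrix n n K}
    (hAB : IsCoprime A.charpoly B.charpoly) {D : Matrix n m K} (h : B * D = D * A) : D = 0 := by
  obtain ⟨a, b, hab⟩ := hAB
  have hinv : aeval B a * aeval B A.charpoly = 1 := by
    simpa [aeval_self_charpoly] using congr(aeval B $hab)
  calc D = aeval B a * (aeval B A.charpoly * D) := by
        rw [← Matrix.mul_assoc, hinv, Matrix.one_mul]
    _ = 0 := by
        rw [aeval_mul_eq_mul_aeval_of_mul_eq_mul h, aeval_self_charpoly, Matrix.mul_zero,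
          Matrix.mul_zero]

end Matrix

theorem mem_cSpectrum_iff {k : ℕ} (A : Matrix (Fin k) (Fin k) ℝ) (z : ℂ) :
    z ∈ cSpectrum A ↔ aeval z A.charpoly = 0 := by
  rw [cSpectrum, Matrix.mem_spectrum_iff_isRoot_charpoly, ← eval_map_algebraMap, IsRoot,
    ← Matrix.charpoly_map]
  rfl

theorem isCoprime_charpoly_of_cSpectrum_inter_eq_empty {k l : ℕ} {A : Matrix (Fin k) (Fin k) ℝ}
    {B : Matrix (Fin l) (Fin l) ℝ} (h : cSpectrum A ∩ cSpectrum B = ∅) :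
    IsCoprime A.charpoly B.charpoly := by
  refine (isCoprime_iff_aeval_ne_zero_of_isAlgClosed ℝ ℂ _ _).2 fun z => ?_
  by_contra! hz
  rw [← mem_cSpectrum_iff, ← mem_cSpectrum_iff] at hz
  exact (Set.eq_empty_iff_forall_notMem.1 h z) hz

theorem extended_configuration_sylvester_general
    (n₁ n₂ m₂ T : ℕ)
    (A₁ : Matrix (Fin n₁) (Fin n₁) ℝ) (C₁ : Matrix (Fin m₂) (Fin n₁) ℝ)
    (A₂ : Matrix (Fin n₂) (Fin n₂) ℝ) (B₂ : Matrix (Fin n₂) (Fin m₂) ℝ)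
    (X₁m X₁p : Matrix (Fin n₁) (Fin T) ℝ) (Y₁m : Matrix (Fin m₂) (Fin T) ℝ)
    (X₂m X₂p : Matrix (Fin n₂) (Fin T) ℝ) (U₂m : Matrix (Fin m₂) (Fin T) ℝ)
    (hrank1 : X₁m.rank = n₁)
    (hX₁p : X₁p = A₁ * X₁m)
    (hY₁m : Y₁m = C₁ * X₁m)
    (hdata2 : X₂p = A₂ * X₂m + B₂ * U₂m)
    (hspec : cSpectrum A₁ ∩ cSpectrum A₂ = ∅) :
    ∀ G : Matrix (Fin T) (Fin n₁) ℝ,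
      ((X₂p * G * X₁m = X₂m * G * X₁p ∧ U₂m * G * X₁m = Y₁m) ↔
        (X₂p * G = X₂m * G * A₁ ∧ U₂m * G = C₁)) ∧
      (X₂p * G = X₂m * G * A₁ → U₂m * G = C₁ →
        A₂ * (X₂m * G) - (X₂m * G) * A₁ = -(B₂ * C₁) ∧
        ∀ Θ : Matrix (Fin n₂) (Fin n₁) ℝ,
          A₂ * Θ - Θ * A₁ = -(B₂ * C₁) → Θ = X₂m * G) := by
  have hrank : X₁m.rank = Fintype.card (Fin n₁) := by rw [hrank1, Fintype.card_fin]
  intro G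
  refine ⟨?_, fun hX hU => ?_⟩
  · rw [hX₁p, hY₁m, ← Matrix.mul_assoc]
    exact and_congr (Matrix.mul_left_injective_of_rank_eq_card hrank).eq_iff
      (Matrix.mul_left_injective_of_rank_eq_card hrank).eq_iff
  · have hG : A₂ * (X₂m * G) + B₂ * C₁ = X₂m * G * A₁ := by
      rw [← hX, hdata2, Matrix.add_mul, Matrix.mul_assoc, Matrix.mul_assoc, hU]
    have hsyl : A₂ * (X₂m * G) - X₂m * G * A₁ = -(B₂ * C₁) := by
      rw [← hG]
      abel
    refine ⟨hsyl, fun Θ hΘ => sub_eq_zero.1 ?_⟩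
    refine Matrix.eq_zero_of_mul_eq_mul_of_isCoprime_charpoly
      (isCoprime_charpoly_of_cSpectrum_inter_eq_empty hspec) ?_
    rw [Matrix.mul_sub, Matrix.sub_mul, sub_eq_sub_iff_sub_eq_sub, hΘ, hsyl]

theorem extended_configuration_sylvester
    (n₁ n₂ m₂ T : ℕ)
    (A₁ : Matrix (Fin n₁) (Fin n₁) ℝ) (C₁ : Matrix (Fin m₂) (Fin n₁) ℝ)
    (A₂ : Matrix (Fin n₂) (Fin n₂) ℝ) (B₂ : Matrix (Fin n₂) (Fin m₂) ℝ)
    (X₁m X₁p : Matrix (Fin n₁) (Fin T) ℝ) (Y₁m : Matrix (Fin m₂) (Fin T) ℝ)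
    (X₂m X₂p : Matrix (Fin n₂) (Fin T) ℝ) (U₂m : Matrix (Fin m₂) (Fin T) ℝ)
    (hrank1 : X₁m.rank = n₁)
    (hX₁p : X₁p = A₁ * X₁m)
    (hY₁m : Y₁m = C₁ * X₁m)
    (hdata2 : X₂p = A₂ * X₂m + B₂ * U₂m)
    (hrank2 : (Matrix.fromRows X₂m U₂m).rank = n₂ + m₂)
    (hspec : cSpectrum A₁ ∩ cSpectrum A₂ = ∅) :
    ∀ G : Matrix (Fin T) (Fin n₁) ℝ,
      ((X₂p * G * X₁m = X₂m * G * X₁p ∧ U₂m * G * X₁m = Y₁m) ↔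
        (X₂p * G = X₂m * G * A₁ ∧ U₂m * G = C₁)) ∧
      (X₂p * G = X₂m * G * A₁ → U₂m * G = C₁ →
        A₂ * (X₂m * G) - (X₂m * G) * A₁ = -(B₂ * C₁) ∧
        ∀ Θ : Matrix (Fin n₂) (Fin n₁) ℝ,
          A₂ * Θ - Θ * A₁ = -(B₂ * C₁) → Θ = X₂m * G) :=
  extended_configuration_sylvester_general n₁ n₂ m₂ T A₁ C₁ A₂ B₂ X₁m X₁p Y₁m X₂m X₂p U₂m hrank1
    hX₁p hY₁m hdata2 hspec
end
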